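/- Let X be a real Banach space, let A, B : X →L[ℝ] X be bounded linear operators that commute (A ∘ B = B ∘ A), and let τ > 0. Then τ·φ₁(τ·(A+B)) − τ·φ₁(τ·A) ∘ φ₁(τ·B) = (1/τ) · ∫_{s∈[0,τ]} ∫_{σ∈[0,τ]} ∫_{ξ∈[s,σ]} (τ−s) · exp((τ−ξ)·A) ∘ φ₁((τ−s)·B) ∘ B ∘ A dξ dσ ds, where the inner integral over ξ from s to σ is an oriented (interval) integral. -/

import Mathlib

/-!
With `E_C(u) = exp ((τ - u) • C)`, the identity `T φ₁(T) = exp T - 1` turns the factor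
`(τ - s) φ₁((τ - s) B) B` into `E_B(s) - 1`, and since `A` commutes with `B` the remaining factor
`E_A(ξ) A` is an exact `ξ`-derivative. All three integrals are then elementary: the only other
inputs are `∫₀^τ E_C = τ φ₁(τ C)` (integrate the exponential series termwise) and
`E_{A+B} = E_A E_B`.
-/

open MeasureTheory intervalIntegral
open scoped Nat

/-- The operator `φ_ℓ(T) = ∑_{k=0}^∞ T^k / (ℓ+k)!` (for `ℓ = 0` this is `exp T`). -/
noncomputable def phi {X : Type*} [NormedAddCommGroup X] [NormedSpace ℝ X] [CompleteSpace X]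
    (ℓ : ℕ) (T : X →L[ℝ] X) : X →L[ℝ] X :=
  ∑' k : ℕ, (((ℓ + k)! : ℝ)⁻¹) • T ^ k

open NormedSpace

section BanachAlgebra

variable {𝔸 : Type*} [NormedRing 𝔸] [NormedAlgebra ℝ 𝔸] [CompleteSpace 𝔸]

theorem intervalIntegral_mul_const {f : ℝ → 𝔸} {a b : ℝ}
    (hf : IntervalIntegrable f volume a b) (c : 𝔸) :
    ∫ x in a..b, f x * c = (∫ x in a..b, f x) * c :=
  ((ContinuousLinearMap.mul ℝ 𝔸).flip c).intervalIntegral_comp_comm hf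

theorem intervalIntegral_const_mul {f : ℝ → 𝔸} {a b : ℝ}
    (hf : IntervalIntegrable f volume a b) (c : 𝔸) :
    ∫ x in a..b, c * f x = c * ∫ x in a..b, f x :=
  (ContinuousLinearMap.mul ℝ 𝔸 c).intervalIntegral_comp_comm hf

theorem integral_exp_sub_smul_mul (C : 𝔸) (τ s σ : ℝ) :
    ∫ ξ in s..σ, exp ((τ - ξ) • C) * C = exp ((τ - s) • C) - exp ((τ - σ) • C) := by
  have hderiv (ξ : ℝ) :
      HasDerivAt (fun u : ℝ => -exp ((τ - u) • C)) (exp ((τ - ξ) • C) * C) ξ := by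
    simpa [Function.comp_def, Pi.neg_def] using
      ((hasDerivAt_exp_smul_const C (τ - ξ)).scomp ξ ((hasDerivAt_id ξ).const_sub τ)).neg
  have hcont : Continuous fun ξ : ℝ => exp ((τ - ξ) • C) * C :=
    ((differentiable_exp_smul_const ℝ C).continuous.comp
      (continuous_const.sub continuous_id)).mul continuous_const
  rw [integral_eq_sub_of_hasDerivAt (fun ξ _ => hderiv ξ) (hcont.intervalIntegrable s σ)]
  abel

end BanachAlgebra

section Phi

variable {X : Type*} [NormedAddCommGroup X] [NormedSpace ℝ X] [CompleteSpace X]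

/-- `NormedSpace.exp_continuous` and `NormedSpace.exp_add_of_commute` are stated for
`ℚ`-algebras, and Mathlib has no such instance on `X →L[ℝ] X`. -/
noncomputable local instance : NormedAlgebra ℚ (X →L[ℝ] X) :=
  NormedAlgebra.restrictScalars ℚ ℝ _

theorem summable_phi (ℓ : ℕ) (T : X →L[ℝ] X) :
    Summable fun k : ℕ => (((ℓ + k)! : ℝ)⁻¹) • T ^ k := by
  refine .of_norm_bounded (norm_expSeries_summable' (𝕂 := ℝ) T) fun k => ?_
  simp only [norm_smul, norm_inv, RCLike.norm_natCast]
  gcongr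
  omega

theorem hasSum_phi (ℓ : ℕ) (T : X →L[ℝ] X) :
    HasSum (fun k : ℕ => (((ℓ + k)! : ℝ)⁻¹) • T ^ k) (phi ℓ T) :=
  (summable_phi ℓ T).hasSum

theorem phi_zero (T : X →L[ℝ] X) : phi 0 T = exp T := by
  simp [phi, exp_eq_tsum ℝ]

theorem phi_eq_add_mul_phi_succ (ℓ : ℕ) (T : X →L[ℝ] X) :
    phi ℓ T = ((ℓ ! : ℝ)⁻¹) • 1 + T * phi (ℓ + 1) T := by
  rw [phi, (summable_phi ℓ T).tsum_eq_zero_add, phi, ← (summable_phi (ℓ + 1) T).tsum_mul_left]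
  congr 1
  refine tsum_congr fun k => ?_
  rw [mul_smul_comm, ← pow_succ', add_right_comm, add_assoc]

theorem mul_phi_one (T : X →L[ℝ] X) : T * phi 1 T = exp T - 1 := by
  rw [← phi_zero, phi_eq_add_mul_phi_succ 0 T]
  simp

theorem Commute.phi_right {A T : X →L[ℝ] X} (h : Commute A T) (ℓ : ℕ) :
    Commute A (phi ℓ T) := by
  rw [Commute, SemiconjBy, phi, ← (summable_phi ℓ T).tsum_mul_left,
    ← (summable_phi ℓ T).tsum_mul_right]
  exact tsum_congr fun k => by rw [mul_smul_comm, smul_mul_assoc, (h.pow_right k).eq]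

theorem integral_exp_smul (T : X →L[ℝ] X) (t : ℝ) :
    ∫ s in (0:ℝ)..t, exp (s • T) = t • phi 1 (t • T) := by
  let F : ℕ → ℝ → X →L[ℝ] X := fun k s => ((k ! : ℝ)⁻¹) • (s • T) ^ k
  have hF_le (k : ℕ) {s : ℝ} (hs : s ∈ Set.uIoc 0 t) : ‖F k s‖ ≤ ‖F k t‖ := by
    have : |s| ≤ |t| := by simpa using Set.abs_sub_left_of_mem_uIcc (Set.uIoc_subset_uIcc hs)
    simp only [F, smul_pow, norm_smul, norm_pow, Real.norm_eq_abs]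
    gcongr
  have hF_cont (k : ℕ) : Continuous (F k) := by fun_prop
  have hF_sum (s : ℝ) : HasSum (fun k => F k s) (exp (s • T)) :=
    exp_series_hasSum_exp' (𝕂 := ℝ) (s • T)
  have hbound : Summable fun k => ‖F k t‖ := norm_expSeries_summable' (𝕂 := ℝ) (t • T)
  have hsum : HasSum (fun k => ∫ s in (0:ℝ)..t, F k s) (∫ s in (0:ℝ)..t, exp (s • T)) :=
    intervalIntegral.hasSum_integral_of_dominated_convergence (fun k _ => ‖F k t‖)
      (fun k => (hF_cont k).aestronglyMeasurable) (fun k => ae_of_all _ fun _ => hF_le k)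
      (ae_of_all _ fun _ _ => hbound) intervalIntegrable_const
      (ae_of_all _ fun s _ => hF_sum s)
  refine hsum.unique ?_
  convert (hasSum_phi 1 (t • T)).const_smul t using 1
  funext k
  simp only [F, smul_pow, smul_smul, intervalIntegral.integral_smul_const,
    intervalIntegral.integral_const_mul, integral_pow]
  congr 1
  rw [add_comm 1 k, Nat.factorial_succ]
  push_cast
  field_simp
  ring

theorem integral_exp_sub_smul (T : X →L[ℝ] X) (τ : ℝ) :
    ∫ u in (0:ℝ)..τ, exp ((τ - u) • T) = τ • phi 1 (τ • T) := by
  rw [integral_comp_sub_left (fun u => exp (u • T)), sub_self, sub_zero, integral_exp_smul]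

theorem integral_smul_exp_mul_phi_one_mul_mul {A B : X →L[ℝ] X} (hAB : Commute A B)
    (τ t s σ : ℝ) :
    ∫ ξ in s..σ, t • (exp ((τ - ξ) • A) * (phi 1 (t • B) * (B * A)))
      = (exp ((τ - s) • A) - exp ((τ - σ) • A)) * (exp (t • B) - 1) := by
  have hphi : Commute (B * A) (phi 1 (t • B)) :=
    (((Commute.refl B).smul_right t).phi_right 1).mul_left ((hAB.smul_right t).phi_right 1)
  have hintegrand (ξ : ℝ) : t • (exp ((τ - ξ) • A) * (phi 1 (t • B) * (B * A)))
      = exp ((τ - ξ) • A) * A * (exp (t • B) - 1) := by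
    rw [← mul_phi_one, ← hphi.eq, ← hAB.eq]
    simp only [mul_assoc, smul_mul_assoc, mul_smul_comm]
  simp_rw [hintegrand]
  rw [intervalIntegral_mul_const (Continuous.intervalIntegrable (by fun_prop) _ _),
    integral_exp_sub_smul_mul A]

theorem integral_exp_sub_sub_exp_mul (A D : X →L[ℝ] X) (τ s : ℝ) :
    ∫ σ in (0:ℝ)..τ, (exp ((τ - s) • A) - exp ((τ - σ) • A)) * D
      = (τ • exp ((τ - s) • A) - τ • phi 1 (τ • A)) * D := by
  rw [intervalIntegral_mul_const (Continuous.intervalIntegrable (by fun_prop) _ _),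
    intervalIntegral.integral_sub intervalIntegrable_const
      (Continuous.intervalIntegrable (by fun_prop) _ _),
    intervalIntegral.integral_const, integral_exp_sub_smul, sub_zero]

theorem integral_smul_exp_sub_mul_exp_sub_one {A B : X →L[ℝ] X} (hAB : Commute A B) (τ : ℝ) :
    ∫ s in (0:ℝ)..τ, (τ • exp ((τ - s) • A) - τ • phi 1 (τ • A)) * (exp ((τ - s) • B) - 1)
      = τ • (τ • phi 1 (τ • (A + B))) - (τ • phi 1 (τ • A)) * (τ • phi 1 (τ • B)) := by
  set P := τ • phi 1 (τ • A)
  have hintegrand (s : ℝ) : (τ • exp ((τ - s) • A) - P) * (exp ((τ - s) • B) - 1)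
      = τ • exp ((τ - s) • (A + B)) - τ • exp ((τ - s) • A) - P * exp ((τ - s) • B) + P := by
    rw [smul_add, exp_add_of_commute ((hAB.smul_left _).smul_right _)]
    simp only [sub_mul, mul_sub, smul_mul_assoc, mul_one]
    abel
  simp_rw [hintegrand]
  rw [intervalIntegral.integral_add, intervalIntegral.integral_sub,
    intervalIntegral.integral_sub, intervalIntegral.integral_smul,
    intervalIntegral.integral_smul, intervalIntegral_const_mul, integral_exp_sub_smul,
    integral_exp_sub_smul, integral_exp_sub_smul, intervalIntegral.integral_const, sub_zero]
  · abel
  all_goals exact Continuous.intervalIntegrable (by fun_prop) _ _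

end Phi

theorem stmt13_general {X : Type*} [NormedAddCommGroup X] [NormedSpace ℝ X] [CompleteSpace X]
    (A B : X →L[ℝ] X) (hcomm : A.comp B = B.comp A) (τ : ℝ) :
    τ • phi 1 (τ • (A + B)) - τ • (phi 1 (τ • A)).comp (phi 1 (τ • B)) =
      τ⁻¹ • ∫ s in (0:ℝ)..τ, ∫ σ in (0:ℝ)..τ, ∫ ξ in s..σ, (τ - s) •
        ((NormedSpace.exp ((τ - ξ) • A)).comp
          ((phi 1 ((τ - s) • B)).comp (B.comp A))) := by
  have hAB : Commute A B := hcomm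
  simp only [← ContinuousLinearMap.mul_def]
  simp_rw [integral_smul_exp_mul_phi_one_mul_mul hAB, integral_exp_sub_sub_exp_mul,
    integral_smul_exp_sub_mul_exp_sub_one hAB]
  simp only [smul_mul_smul_comm, smul_sub, smul_smul, ← mul_assoc, inv_mul_mul_self]

theorem stmt13 {X : Type*} [NormedAddCommGroup X] [NormedSpace ℝ X] [CompleteSpace X]
    (A B : X →L[ℝ] X) (hcomm : A.comp B = B.comp A) (τ : ℝ) (hτ : 0 < τ) :
    τ • phi 1 (τ • (A + B)) - τ • (phi 1 (τ • A)).comp (phi 1 (τ • B)) =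
      τ⁻¹ • ∫ s in (0:ℝ)..τ, ∫ σ in (0:ℝ)..τ, ∫ ξ in s..σ, (τ - s) •
        ((NormedSpace.exp ((τ - ξ) • A)).comp
          ((phi 1 ((τ - s) • B)).comp (B.comp A))) :=
  stmt13_general A B hcomm τ
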